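/- arXiv:2301.01657 — 3 statements merged into one kernel-verified Lean document; each statement's English description precedes it below -/
import Mathlib

section
/- Let n, k, ℓ be natural numbers with ℓ ≤ n. Then C(n−ℓ, k) · n^k ≤ C(n, k) · (n−ℓ)^k, as natural numbers. (This expresses that the probability of a random k-subset avoiding a fixed ℓ-subset is at most ((n−ℓ)/n)^k, the probability when sampling k elements with repetition.) -/
lemma descFact_aux (m n : ℕ) (h : m ≤ n) :
    ∀ k, Nat.descFactorial m k * n ^ k ≤ Nat.descFactorial n k * m ^ k := by
  intro k
  induction k with
  | zero => simp
  | succ k ih =>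
      rw [Nat.descFactorial_succ, Nat.descFactorial_succ, pow_succ, pow_succ]
      calc (m - k) * Nat.descFactorial m k * (n ^ k * n)
          = ((m - k) * n) * (Nat.descFactorial m k * n ^ k) := by ring
        _ ≤ ((n - k) * m) * (Nat.descFactorial n k * m ^ k) := by
            apply Nat.mul_le_mul _ ih
            rw [Nat.sub_mul, Nat.sub_mul, Nat.mul_comm m n]
            exact Nat.sub_le_sub_left (Nat.mul_le_mul_left k h) _
        _ = (n - k) * Nat.descFactorial n k * (m ^ k * m) := by ring

theorem stmt_3 (n k ℓ : ℕ) (hℓ : ℓ ≤ n) :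
    Nat.choose (n - ℓ) k * n ^ k ≤ Nat.choose n k * (n - ℓ) ^ k := by
  have h := descFact_aux (n - ℓ) n (Nat.sub_le n ℓ) k
  refine Nat.le_of_mul_le_mul_right ?_ (Nat.factorial_pos k)
  calc Nat.choose (n - ℓ) k * n ^ k * k.factorial
      = (k.factorial * Nat.choose (n - ℓ) k) * n ^ k := by ring
    _ = Nat.descFactorial (n - ℓ) k * n ^ k := by
        rw [Nat.descFactorial_eq_factorial_mul_choose]
    _ ≤ Nat.descFactorial n k * (n - ℓ) ^ k := h
    _ = (k.factorial * Nat.choose n k) * (n - ℓ) ^ k := by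
        rw [Nat.descFactorial_eq_factorial_mul_choose]
    _ = Nat.choose n k * (n - ℓ) ^ k * k.factorial := by ring
end

section
/- Let G be a finite group acting transitively on a finite set X, let x ∈ X, let m be a natural number, and let a : Fin u → G and b : Fin v → G be families of group elements with u + v ≤ m. Then 4 · |X| · |{s ∈ G : ∃ i, j such that a(i) • x = b(j) • (s • x)}| ≤ m² · |G|. (For uniformly random s ∈ G, the probability of a collision a(i) • x = b(j) • (s • x) is hence at most m²/(4|X|), which is the core estimate of the square-root generic lower bound for the group action problem.) -/
open Finset

lemma fiber_card_mul {G X : Type*} [Group G] [Fintype G] [Fintype X] [DecidableEq X]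
    [MulAction G X] (htrans : ∀ x y : X, ∃ g : G, g • x = y) (x y : X) :
    (Finset.univ.filter (fun s : G => s • x = y)).card * Fintype.card X = Fintype.card G := by
  classical
  haveI : MulAction.IsPretransitive G X := ⟨fun a b => htrans a b⟩
  obtain ⟨g, hg⟩ := htrans x y
  have h1 : (Finset.univ.filter (fun s : G => s • x = y)).card
      = (Finset.univ.filter (fun s : G => s • x = x)).card := by
    apply Finset.card_bij' (fun s _ => g⁻¹ * s) (fun t _ => g * t)
    · intro s hs
      simp only [mem_filter, mem_univ, true_and] at hs ⊢
      rw [mul_smul, hs, ← hg, inv_smul_smul]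
    · intro t ht
      simp only [mem_filter, mem_univ, true_and] at ht ⊢
      rw [mul_smul, ht, hg]
    · intro s _; group
    · intro t _; group
  have h2 : (Finset.univ.filter (fun s : G => s • x = x)).card
      = Fintype.card (MulAction.stabilizer G x) := by
    rw [Fintype.card_subtype]
    congr 1
  have h3 : Fintype.card (MulAction.orbit G x) = Fintype.card X := by
    have : MulAction.orbit G x = Set.univ := MulAction.orbit_eq_univ G x
    rw [Set.ext_iff] at this
    exact Fintype.card_congr (Equiv.subtypeUnivEquiv (fun y => (this y).mpr trivial))
  have h4 := MulAction.card_orbit_mul_card_stabilizer_eq_card_group G x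
  rw [h1, h2, ← h4, h3, mul_comm]

theorem stmt_6 {G X : Type*} [Group G] [Fintype G] [Fintype X] [DecidableEq X]
    [MulAction G X] (htrans : ∀ x y : X, ∃ g : G, g • x = y)
    (x : X) (m u v : ℕ) (a : Fin u → G) (b : Fin v → G) (huv : u + v ≤ m) :
    4 * Fintype.card X *
        (Finset.univ.filter
          (fun s : G => ∃ i : Fin u, ∃ j : Fin v, a i • x = b j • (s • x))).card
      ≤ m ^ 2 * Fintype.card G := by
  classical
  set S := Finset.univ.filter
      (fun s : G => ∃ i : Fin u, ∃ j : Fin v, a i • x = b j • (s • x)) with hS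
  have hsub : S ⊆ (Finset.univ : Finset (Fin u × Fin v)).biUnion
      (fun p => Finset.univ.filter (fun s : G => s • x = (b p.2)⁻¹ • (a p.1 • x))) := by
    intro s hs
    simp only [hS, mem_filter, mem_univ, true_and] at hs
    obtain ⟨i, j, hij⟩ := hs
    simp only [mem_biUnion, mem_univ, mem_filter, true_and]
    exact ⟨(i, j), by rw [hij, inv_smul_smul]⟩
  have hcard : S.card ≤ ∑ p : Fin u × Fin v,
      (Finset.univ.filter (fun s : G => s • x = (b p.2)⁻¹ • (a p.1 • x))).card :=
    le_trans (Finset.card_le_card hsub) (Finset.card_biUnion_le)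
  have key : S.card * Fintype.card X ≤ u * v * Fintype.card G := by
    calc S.card * Fintype.card X
        ≤ (∑ p : Fin u × Fin v,
            (Finset.univ.filter (fun s : G => s • x = (b p.2)⁻¹ • (a p.1 • x))).card)
            * Fintype.card X := Nat.mul_le_mul_right _ hcard
      _ = ∑ p : Fin u × Fin v,
            ((Finset.univ.filter (fun s : G => s • x = (b p.2)⁻¹ • (a p.1 • x))).card
              * Fintype.card X) := by rw [Finset.sum_mul]
      _ = ∑ _p : Fin u × Fin v, Fintype.card G := by
            exact Finset.sum_congr rfl (fun p _ => fiber_card_mul htrans x _)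
      _ = u * v * Fintype.card G := by simp [Fintype.card_prod, mul_comm]
  have h4uv : 4 * (u * v) ≤ m ^ 2 := by
    have h1 : 4 * (u * v) ≤ (u + v) ^ 2 := by nlinarith [two_mul_le_add_sq u v]
    exact le_trans h1 (Nat.pow_le_pow_left huv 2)
  calc 4 * Fintype.card X * S.card = 4 * (S.card * Fintype.card X) := by ring
    _ ≤ 4 * (u * v * Fintype.card G) := Nat.mul_le_mul_left _ key
    _ = 4 * (u * v) * Fintype.card G := by ring
    _ ≤ m ^ 2 * Fintype.card G := Nat.mul_le_mul_right _ h4uv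
end

section
/- Let a group G act on a set X, let x, y ∈ X, let f : X → G, and let a, b : ℕ → G satisfy a(n+1) = f(a(n) • x) · a(n) and b(n+1) = f(b(n) • y) · b(n) for all n. Suppose a(k) • x = a(2k) • x (an a-loop of length k) and a(k+i) • x = b(ℓ+j) • y for some i ≤ k and some j. Then a(k) • x = b(ℓ + j + (k − i)) • y. (Hence the collision search of the Pollard-rho attack, checking a(k) • x against b(ℓ+s) • y for s = 0, 1, 2, …, succeeds.) -/
theorem stmt_13 {G X : Type*} [Group G] [MulAction G X]
    (x y : X) (f : X → G) (a b : ℕ → G)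
    (ha : ∀ n, a (n + 1) = f (a n • x) * a n)
    (hb : ∀ n, b (n + 1) = f (b n • y) * b n)
    (k ℓ i j : ℕ) (hik : i ≤ k)
    (hloop : a k • x = a (2 * k) • x)
    (hcol : a (k + i) • x = b (ℓ + j) • y) :
    a k • x = b (ℓ + j + (k - i)) • y := by
  have key : ∀ t, a (k + i + t) • x = b (ℓ + j + t) • y := by
    intro t
    induction t with
    | zero => simpa using hcol
    | succ t ih =>
      have : a (k + i + t + 1) • x = b (ℓ + j + t + 1) • y := by
        rw [ha, hb, mul_smul, mul_smul, ih]
      simpa [Nat.add_assoc] using this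
  have h := key (k - i)
  have : k + i + (k - i) = 2 * k := by omega
  rw [this] at h
  rw [hloop, h]
end
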